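/- arXiv:2402.07358 — 6 statements merged into one kernel-verified Lean document; each statement's English description precedes it below -/
import Mathlib

section
/- For all matrices A B : Fin m → Fin n → ℝ and every vector x : Fin n → ℝ, one has φ₀(φ₀(x)) ≤ φ₀(x) pointwise; consequently the sequence of iterates x(r+1) = φ₀(x(r)) produced by the alternating method is non-increasing from the first step onward. -/
/-!
For every `i, k` we have `max (A i k) (B i k) + φ₀(x) k ≤ min ((A⊗x) i, (B⊗x) i)`, since that
is one of the terms of the minimum defining `φ₀(x) k`. Hence `A⊗φ₀(x) ≤ min (A⊗x, B⊗x)`, so the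
vector minimised in `φ₀` only decreases when `x` is replaced by `φ₀(x)`, which gives
`φ₀(φ₀(x)) ≤ φ₀(x)`. As `φ₀` is monotone, the iterates from `φ₀(x)` on are then non-increasing.
-/

open Finset

/-- Max-plus product of a real matrix with a real vector:
`(mpMul M x) i = max_k (M i k + x k)`. -/
noncomputable def mpMul {p n : ℕ} [NeZero p] [NeZero n]
    (M : Fin p → Fin n → ℝ) (x : Fin n → ℝ) : Fin p → ℝ :=
  fun i => univ.sup' univ_nonempty fun k => M i k + x k

/-- One step of the alternating method for the system `A ⊗ x = B ⊗ x`: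
`φ₀(x) j = min_i ( -max(A i j, B i j) + min((A⊗x) i, (B⊗x) i) )`. -/
noncomputable def phi0 {m n : ℕ} [NeZero m] [NeZero n]
    (A B : Fin m → Fin n → ℝ) (x : Fin n → ℝ) : Fin n → ℝ :=
  fun j => univ.inf' univ_nonempty fun i =>
    (-(max (A i j) (B i j))) + min (mpMul A x i) (mpMul B x i)

section AlternatingMethod

variable {m n : ℕ} [NeZero m] [NeZero n]

theorem mpMul_mono (M : Fin m → Fin n → ℝ) : Monotone (mpMul M) := fun _ _ hxy _ =>
  sup'_mono_fun fun k _ => add_le_add_right (hxy k) _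

theorem phi0_le_of_min_mpMul_le (A B : Fin m → Fin n → ℝ) {x y : Fin n → ℝ}
    (h : ∀ i, min (mpMul A x i) (mpMul B x i) ≤ min (mpMul A y i) (mpMul B y i)) :
    phi0 A B x ≤ phi0 A B y := fun _ =>
  le_inf' _ _ fun i _ => inf'_le_of_le _ (mem_univ i) (add_le_add_right (h i) _)

theorem phi0_mono (A B : Fin m → Fin n → ℝ) : Monotone (phi0 A B) := fun _ _ hxy =>
  phi0_le_of_min_mpMul_le A B fun i => min_le_min (mpMul_mono A hxy i) (mpMul_mono B hxy i)

theorem mpMul_phi0_le (A B : Fin m → Fin n → ℝ) (x : Fin n → ℝ) (i : Fin m) :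
    mpMul A (phi0 A B x) i ≤ min (mpMul A x i) (mpMul B x i) := by
  refine sup'_le _ _ fun k _ => ?_
  have hk : phi0 A B x k ≤ -max (A i k) (B i k) + min (mpMul A x i) (mpMul B x i) :=
    inf'_le _ (mem_univ i)
  linarith [le_max_left (A i k) (B i k)]

theorem phi0_phi0_le (A B : Fin m → Fin n → ℝ) (x : Fin n → ℝ) :
    phi0 A B (phi0 A B x) ≤ phi0 A B x :=
  phi0_le_of_min_mpMul_le A B fun i => (min_le_left _ _).trans (mpMul_phi0_le A B x i)

end AlternatingMethod

theorem stmt0 {m n : ℕ} [NeZero m] [NeZero n]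
    (A B : Fin m → Fin n → ℝ) (x : Fin n → ℝ) :
    (∀ j, phi0 A B (phi0 A B x) j ≤ phi0 A B x j) ∧
    (∀ r : ℕ, 1 ≤ r → ∀ j, (phi0 A B)^[r + 1] x j ≤ (phi0 A B)^[r] x j) := by
  refine ⟨phi0_phi0_le A B x, fun r hr => ?_⟩
  obtain ⟨k, rfl⟩ := Nat.exists_eq_add_of_le' hr
  have hanti := (phi0_mono A B).antitone_iterate_of_map_le (phi0_phi0_le A B x)
  rw [Function.iterate_succ_apply, Function.iterate_succ_apply]
  exact hanti k.le_succ
end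

section
/- Let A B : Fin m → Fin n → ℝ and suppose x : Fin n → ℝ is a solution, i.e. (A⊗x) i = (B⊗x) i for all i. For each i define M^i(x) = { k : Fin n | (A⊗x) i = A i k + x k or (B⊗x) i = B i k + x k }. If ⋃ i, M^i(x) = Fin n (i.e. for every k there exists i with k ∈ M^i(x)), then x is stable: φ₀(x) = x. -/
open Finset

/-
For a solution, every column `j` satisfies `A i j + x j ≤ (A⊗x) i = (B⊗x) i` and likewise for `B`,
so `x j ≤ φ₀(x) j`. Conversely, if `j` attains the maximum in some row `i` of `A⊗x` or of `B⊗x`,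
then that row's term of the minimum defining `φ₀(x) j` is at most `x j`.
-/

section MaxPlus

variable {m n : ℕ} [NeZero m] [NeZero n]

theorem le_mpMul (M : Fin m → Fin n → ℝ) (x : Fin n → ℝ) (i : Fin m) (k : Fin n) :
    M i k + x k ≤ mpMul M x i :=
  le_sup' (fun k => M i k + x k) (mem_univ k)

theorem max_add_le_min_mpMul {A B : Fin m → Fin n → ℝ} {x : Fin n → ℝ} {i : Fin m}
    (hx : mpMul A x i = mpMul B x i) (j : Fin n) :
    max (A i j) (B i j) + x j ≤ min (mpMul A x i) (mpMul B x i) := by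
  have hA := le_mpMul A x i j
  have hB := le_mpMul B x i j
  rw [← max_add_add_right]
  exact max_le (le_min hA (hx ▸ hA)) (le_min (hx ▸ hB) hB)

theorem min_mpMul_le_max_add {A B : Fin m → Fin n → ℝ} {x : Fin n → ℝ} {i : Fin m} {j : Fin n}
    (hij : mpMul A x i = A i j + x j ∨ mpMul B x i = B i j + x j) :
    min (mpMul A x i) (mpMul B x i) ≤ max (A i j) (B i j) + x j := by
  rcases hij with hA | hB
  · calc min (mpMul A x i) (mpMul B x i) ≤ A i j + x j := hA ▸ min_le_left _ _
      _ ≤ max (A i j) (B i j) + x j := by gcongr; exact le_max_left _ _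
  · calc min (mpMul A x i) (mpMul B x i) ≤ B i j + x j := hB ▸ min_le_right _ _
      _ ≤ max (A i j) (B i j) + x j := by gcongr; exact le_max_right _ _

theorem le_phi0 {A B : Fin m → Fin n → ℝ} {x : Fin n → ℝ} (hx : ∀ i, mpMul A x i = mpMul B x i)
    (j : Fin n) : x j ≤ phi0 A B x j :=
  le_inf' _ _ fun i _ => by linarith [max_add_le_min_mpMul (hx i) j]

theorem phi0_le {A B : Fin m → Fin n → ℝ} {x : Fin n → ℝ} {i : Fin m} {j : Fin n}
    (hij : mpMul A x i = A i j + x j ∨ mpMul B x i = B i j + x j) : phi0 A B x j ≤ x j :=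
  (inf'_le _ (mem_univ i)).trans (by linarith [min_mpMul_le_max_add hij])

end MaxPlus

theorem stmt2 {m n : ℕ} [NeZero m] [NeZero n]
    (A B : Fin m → Fin n → ℝ) (x : Fin n → ℝ)
    (hx : ∀ i, mpMul A x i = mpMul B x i)
    (hcover : ∀ k : Fin n, ∃ i : Fin m,
      mpMul A x i = A i k + x k ∨ mpMul B x i = B i k + x k) :
    phi0 A B x = x := by
  funext j
  obtain ⟨i, hij⟩ := hcover j
  exact le_antisymm (phi0_le hij) (le_phi0 hx j)
end

section
/- Let α > 0 and n ≥ 1. A vector x : Fin n → WithBot ℝ satisfies, for every k ∈ Fin n, Finset.univ.sup (fun i => ((if i = k then α else 0 : ℝ) : WithBot ℝ) + x i) = Finset.univ.sup (fun i => ((if i = k then α else (−1) : ℝ) : WithBot ℝ) + x i) — i.e. x solves the two-sided system D(α,0)⊗x = D(α,−1)⊗x — if and only if either x i = ⊥ for all i, or there exists y : Fin n → ℝ with x = (fun i => (y i : WithBot ℝ)) and |y j − y k| ≤ α for all j k. -/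
/-!
Row `k` of `D(a,c) ⊗ x` is `(a + x k) ⊔ (c + ⨆_{i ≠ k} x i)`. Lowering `c` to `b < c` leaves it
unchanged exactly when the second term does not exceed the first, so for `c = 0` the system says
`x i ≤ α + x k` for all `i, k`: either every entry is `⊥`, or all are finite and pairwise within `α`.
-/

open Finset

theorem sup_eq_sup_iff_le_of_lt {α : Type*} [LinearOrder α] {p u v : α} (huv : u < v) :
    p ⊔ v = p ⊔ u ↔ v ≤ p := by
  refine ⟨fun h => ?_, fun hvp => ?_⟩
  · by_contra! hpv
    rw [sup_of_le_right hpv.le] at h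
    exact (max_lt hpv huv).ne' h
  · rw [sup_of_le_left hvp, sup_of_le_left (huv.le.trans hvp)]

section MaxPlus

variable {G ι : Type*} [AddCommGroup G] [LinearOrder G] [IsOrderedAddMonoid G]

theorem WithBot.coe_add_finset_sup {s : Finset ι} (b : G) (x : ι → WithBot G) :
    (b : WithBot G) + s.sup x = s.sup fun i => (b : WithBot G) + x i :=
  apply_sup_eq_sup_comp_of_linearOrder (fun m => (b : WithBot G) + m)
    (fun _ _ h => add_le_add_right h _) (WithBot.add_bot _)

theorem forall_le_add_iff_forall_eq_bot_or_abs_sub_le (a : G) (x : ι → WithBot G) :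
    (∀ i k, x i ≤ a + x k) ↔
      (∀ i, x i = ⊥) ∨ ∃ y : ι → G, x = (fun i => (y i : WithBot G)) ∧ ∀ j k, |y j - y k| ≤ a := by
  constructor
  · intro h
    by_cases hbot : ∃ k, x k = ⊥
    · obtain ⟨k, hk⟩ := hbot
      exact Or.inl fun i => by simpa [hk] using h i k
    · simp only [not_exists] at hbot
      choose y hy using fun i => WithBot.ne_bot_iff_exists.1 (hbot i)
      obtain rfl : x = fun i => (y i : WithBot G) := funext fun i => (hy i).symm
      simp only [← WithBot.coe_add, WithBot.coe_le_coe] at h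
      exact Or.inr ⟨y, rfl, fun j k =>
        abs_sub_le_iff.2 ⟨sub_le_iff_le_add.2 (h j k), sub_le_iff_le_add.2 (h k j)⟩⟩
  · rintro (hbot | ⟨y, rfl, hy⟩) i k
    · simp [hbot i]
    · dsimp only
      exact_mod_cast sub_le_iff_le_add.1 (abs_sub_le_iff.1 (hy i k)).1

variable [Fintype ι] [DecidableEq ι]

theorem sup_ite_add_eq (a b : G) (x : ι → WithBot G) (k : ι) :
    univ.sup (fun i => ((if i = k then a else b : G) : WithBot G) + x i) =
      ((a : WithBot G) + x k) ⊔ ((b : WithBot G) + (univ.erase k).sup x) := by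
  conv_lhs => rw [← insert_erase (mem_univ k), sup_insert, if_pos rfl]
  rw [WithBot.coe_add_finset_sup]
  exact congrArg _ (sup_congr rfl fun i hi => by rw [if_neg (ne_of_mem_erase hi)])

theorem sup_ite_add_eq_iff {a b c : G} (hbc : b < c) (x : ι → WithBot G) (k : ι) :
    univ.sup (fun i => ((if i = k then a else c : G) : WithBot G) + x i) =
        univ.sup (fun i => ((if i = k then a else b : G) : WithBot G) + x i) ↔
      ∀ i ≠ k, (c : WithBot G) + x i ≤ a + x k := by
  have hdrop : ∀ m : WithBot G, ((a : WithBot G) + x k) ⊔ (c + m) = (a + x k) ⊔ (b + m) ↔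
      (c : WithBot G) + m ≤ a + x k := by
    intro m
    induction m using WithBot.recBotCoe with
    | bot => simp
    | coe m => exact sup_eq_sup_iff_le_of_lt (by exact_mod_cast add_lt_add_left hbc m)
  rw [sup_ite_add_eq, sup_ite_add_eq, hdrop, WithBot.coe_add_finset_sup, Finset.sup_le_iff]
  simp

theorem forall_sup_ite_add_eq_iff {a b : G} (ha : 0 ≤ a) (hb : b < 0) (x : ι → WithBot G) :
    (∀ k, univ.sup (fun i => ((if i = k then a else 0 : G) : WithBot G) + x i) =
        univ.sup (fun i => ((if i = k then a else b : G) : WithBot G) + x i)) ↔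
      ∀ i k, x i ≤ a + x k := by
  simp only [sup_ite_add_eq_iff hb, WithBot.coe_zero, zero_add]
  refine ⟨fun h i k => ?_, fun h k i _ => h i k⟩
  obtain rfl | hik := eq_or_ne i k
  · exact le_add_of_nonneg_left (by exact_mod_cast ha)
  · exact h k i hik

end MaxPlus

theorem stmt3_general {n : ℕ} (α : ℝ) (hα : 0 < α) (x : Fin n → WithBot ℝ) :
    (∀ k : Fin n,
      univ.sup (fun i => ((if i = k then α else 0 : ℝ) : WithBot ℝ) + x i) =
      univ.sup (fun i => ((if i = k then α else (-1) : ℝ) : WithBot ℝ) + x i)) ↔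
    ((∀ i, x i = ⊥) ∨
      ∃ y : Fin n → ℝ, x = (fun i => (y i : WithBot ℝ)) ∧
        ∀ j k, |y j - y k| ≤ α) := by
  rw [forall_sup_ite_add_eq_iff hα.le (by norm_num) x]
  exact forall_le_add_iff_forall_eq_bot_or_abs_sub_le α x

theorem stmt3 {n : ℕ} [NeZero n] (α : ℝ) (hα : 0 < α) (x : Fin n → WithBot ℝ) :
    (∀ k : Fin n,
      univ.sup (fun i => ((if i = k then α else 0 : ℝ) : WithBot ℝ) + x i) =
      univ.sup (fun i => ((if i = k then α else (-1) : ℝ) : WithBot ℝ) + x i)) ↔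
    ((∀ i, x i = ⊥) ∨
      ∃ y : Fin n → ℝ, x = (fun i => (y i : WithBot ℝ)) ∧
        ∀ j k, |y j - y k| ≤ α) :=
  stmt3_general α hα x
end

section
/- Let A B : Fin m → Fin n → ℝ (m, n ≥ 1) and let α : ℝ satisfy α > max(A i k, B i k) − max(A i j, B i j) for all i ∈ Fin m and j k ∈ Fin n (in particular α > 0). Then the following are equivalent: (i) the solution set is projectively bounded, i.e. every x : Fin n → WithBot ℝ with (A⊗x) i = (B⊗x) i for all i satisfies either x i = ⊥ for all i or x i ≠ ⊥ for all i; (ii) every x : Fin n → WithBot ℝ with (A⊗x) i = (B⊗x) i for all i also satisfies (D(α,0)⊗x) k = (D(α,−1)⊗x) k for all k ∈ Fin n. -/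
/-!
If `x` solves `A ⊗ x = B ⊗ x` with all entries finite, keep only the entries `x i` within `α` of
every other entry and set the rest to `⊥`. Each row maximum `max_k (A i k + x k)` is attained at a
kept index, because the hypothesis on `α` bounds how far a maximizing index can lie below the
maximum of `x`; hence the truncated vector is again a solution. Projective boundedness forces it
to be finite, so all entries of `x` lie within `α` of each other and in row `k` of `D(α,β) ⊗ x`
the diagonal term `α + x k` dominates for every `β ≤ 0`.
Conversely, if `x k = ⊥` then row `k` of `D(α,β) ⊗ x` equals `β + max_i x i`, so `x` with a finite
and an infinite entry separates `β = 0` from `β = -1`.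
-/

open Finset

section MaxPlus

variable {ι κ : Type*} [Fintype ι]

def maxPlusDot (d : ι → ℝ) (x : ι → WithBot ℝ) : WithBot ℝ :=
  univ.sup fun k => (d k : WithBot ℝ) + x k

def IsMaxPlusSolution (A B : κ → ι → ℝ) (x : ι → WithBot ℝ) : Prop :=
  ∀ i, maxPlusDot (A i) x = maxPlusDot (B i) x

lemma le_maxPlusDot (d : ι → ℝ) (x : ι → WithBot ℝ) (j : ι) :
    (d j : WithBot ℝ) + x j ≤ maxPlusDot d x :=
  le_sup (f := fun k => (d k : WithBot ℝ) + x k) (mem_univ j)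

lemma maxPlusDot_mono (d : ι → ℝ) {x y : ι → WithBot ℝ} (hxy : x ≤ y) :
    maxPlusDot d x ≤ maxPlusDot d y :=
  sup_mono_fun fun k _ => add_le_add_right (hxy k) _

lemma maxPlusDot_of_forall_eq_bot (d : ι → ℝ) {x : ι → WithBot ℝ} (hx : ∀ i, x i = ⊥) :
    maxPlusDot d x = ⊥ :=
  (Finset.sup_eq_bot_iff _ _).mpr fun k _ => by rw [hx k, WithBot.add_bot]

lemma maxPlusDot_coe_of_forall_le {d x : ι → ℝ} {k : ι} (hk : ∀ j, d j + x j ≤ d k + x k) :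
    maxPlusDot d (fun i => (x i : WithBot ℝ)) = ((d k + x k : ℝ) : WithBot ℝ) :=
  le_antisymm (Finset.sup_le fun j _ => WithBot.coe_le_coe.mpr (hk j))
    (by rw [WithBot.coe_add]; exact le_maxPlusDot d (fun i => (x i : WithBot ℝ)) k)

lemma maxPlusDot_const (b : ℝ) (x : ι → WithBot ℝ) :
    maxPlusDot (fun _ => b) x = (b : WithBot ℝ) + univ.sup x :=
  (apply_sup_eq_sup_comp_of_linearOrder ((b : WithBot ℝ) + ·)
    (fun _ _ h => add_le_add_right h _) (WithBot.add_bot _)).symm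

lemma maxPlusDot_ite_of_eq_bot [DecidableEq ι] {x : ι → WithBot ℝ} {k : ι} (hk : x k = ⊥)
    (a b : ℝ) :
    maxPlusDot (fun i => if i = k then a else b) x = maxPlusDot (fun _ => b) x :=
  sup_congr rfl fun i _ => by
    by_cases hik : i = k
    · simp only [hik, hk, WithBot.add_bot]
    · simp only [hik, if_false]

end MaxPlus

section Truncation

variable {ι κ : Type*} [Fintype ι] {α : ℝ} {x : ι → ℝ}

def IsProjectivelyBounded (S : Set (ι → WithBot ℝ)) : Prop :=
  ∀ y ∈ S, (∀ i, y i = ⊥) ∨ ∀ i, y i ≠ ⊥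

noncomputable def nearMax (α : ℝ) (x : ι → ℝ) : ι → WithBot ℝ := fun i =>
  if ∀ j, x j < x i + α then (x i : WithBot ℝ) else ⊥

lemma nearMax_le (α : ℝ) (x : ι → ℝ) : nearMax α x ≤ fun i => (x i : WithBot ℝ) := fun i => by
  unfold nearMax
  split_ifs <;> simp

lemma nearMax_of_forall_lt {i : ι} (h : ∀ j, x j < x i + α) : nearMax α x i = x i :=
  if_pos h

lemma forall_lt_of_nearMax_ne_bot {i : ι} (h : nearMax α x i ≠ ⊥) : ∀ j, x j < x i + α := by
  by_contra h'
  exact h (if_neg h')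

lemma nearMax_ne_bot_of_forall_le (hα : 0 < α) {k : ι} (hk : ∀ j, x j ≤ x k) :
    nearMax α x k ≠ ⊥ := by
  rw [nearMax_of_forall_lt fun j => by linarith [hk j]]
  exact WithBot.coe_ne_bot

lemma forall_lt_add_of_forall_le {d e : ι → ℝ}
    (hde : ∀ j k, max (d k) (e k) - max (d j) (e j) < α)
    (hsol : maxPlusDot d (fun i => (x i : WithBot ℝ)) = maxPlusDot e (fun i => (x i : WithBot ℝ)))
    {k : ι} (hk : ∀ j, d j + x j ≤ d k + x k) (j : ι) : x j < x k + α := by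
  have hek : e j + x j ≤ d k + x k := by
    have h := le_maxPlusDot e (fun i => (x i : WithBot ℝ)) j
    rw [← hsol, maxPlusDot_coe_of_forall_le hk] at h
    exact_mod_cast h
  have hmax : max (d j) (e j) + x j ≤ max (d k) (e k) + x k := by
    rw [← max_add_add_right]
    exact (max_le (hk j) hek).trans (by gcongr; exact le_max_left _ _)
  linarith [hde j k]

lemma maxPlusDot_nearMax [Nonempty ι] {d e : ι → ℝ}
    (hde : ∀ j k, max (d k) (e k) - max (d j) (e j) < α)
    (hsol : maxPlusDot d (fun i => (x i : WithBot ℝ)) = maxPlusDot e (fun i => (x i : WithBot ℝ))) :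
    maxPlusDot d (nearMax α x) = maxPlusDot d (fun i => (x i : WithBot ℝ)) := by
  obtain ⟨k, -, hk⟩ := exists_max_image univ (fun j => d j + x j) univ_nonempty
  have hk' : ∀ j, d j + x j ≤ d k + x k := fun j => hk j (mem_univ j)
  refine le_antisymm (maxPlusDot_mono d (nearMax_le α x)) ?_
  rw [maxPlusDot_coe_of_forall_le hk', WithBot.coe_add,
    ← nearMax_of_forall_lt (forall_lt_add_of_forall_le hde hsol hk')]
  exact le_maxPlusDot d _ k

lemma IsMaxPlusSolution.nearMax [Nonempty ι] {A B : κ → ι → ℝ}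
    (hAB : ∀ i j k, max (A i k) (B i k) - max (A i j) (B i j) < α)
    (hx : IsMaxPlusSolution A B fun i => (x i : WithBot ℝ)) :
    IsMaxPlusSolution A B (nearMax α x) := fun i => by
  rw [maxPlusDot_nearMax (hAB i) (hx i),
    maxPlusDot_nearMax (fun j k => by simpa only [max_comm] using hAB i j k) (hx i).symm]
  exact hx i

lemma forall_lt_add_of_isMaxPlusSolution {A B : κ → ι → ℝ} (hα : 0 < α)
    (hAB : ∀ i j k, max (A i k) (B i k) - max (A i j) (B i j) < α)
    (hbdd : IsProjectivelyBounded {y | IsMaxPlusSolution A B y})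
    (hx : IsMaxPlusSolution A B fun i => (x i : WithBot ℝ)) (j k : ι) : x j < x k + α := by
  have : Nonempty ι := ⟨j⟩
  obtain ⟨k₀, -, hk₀⟩ := exists_max_image univ x univ_nonempty
  rcases hbdd _ (hx.nearMax hAB) with hbot | hfin
  · exact absurd (hbot k₀) (nearMax_ne_bot_of_forall_le hα fun i => hk₀ i (mem_univ i))
  · exact forall_lt_of_nearMax_ne_bot (hfin k) j

end Truncation

section Diagonal

variable {ι : Type*} [Fintype ι] [DecidableEq ι]

lemma maxPlusDot_ite_of_forall_lt {x : ι → ℝ} {k : ι} {α β : ℝ} (hβ : β ≤ 0)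
    (hx : ∀ j, x j < x k + α) :
    maxPlusDot (fun i => if i = k then α else β) (fun i => (x i : WithBot ℝ)) =
      ((α + x k : ℝ) : WithBot ℝ) := by
  rw [maxPlusDot_coe_of_forall_le (k := k) fun j => ?_, if_pos rfl]
  by_cases hjk : j = k
  · rw [hjk]
  · rw [if_neg hjk, if_pos rfl]
    linarith [hx j]

lemma maxPlusDot_ite_ne_of_eq_bot {x : ι → WithBot ℝ} {j k : ι} (hj : x j ≠ ⊥) (hk : x k = ⊥)
    (a : ℝ) {b b' : ℝ} (hb : b ≠ b') :
    maxPlusDot (fun i => if i = k then a else b) x ≠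
      maxPlusDot (fun i => if i = k then a else b') x := by
  rw [maxPlusDot_ite_of_eq_bot hk, maxPlusDot_ite_of_eq_bot hk, maxPlusDot_const,
    maxPlusDot_const]
  obtain ⟨s, hs⟩ := WithBot.ne_bot_iff_exists.mp (ne_bot_of_le_ne_bot hj (le_sup (mem_univ j)))
  rw [← hs, ← WithBot.coe_add, ← WithBot.coe_add, Ne, WithBot.coe_inj]
  intro h
  exact hb (by linarith)

end Diagonal

theorem stmt4_general {m n : ℕ} [NeZero m]
    (A B : Fin m → Fin n → ℝ) (α : ℝ)
    (hα : ∀ (i : Fin m) (j k : Fin n),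
      max (A i k) (B i k) - max (A i j) (B i j) < α) :
    (∀ x : Fin n → WithBot ℝ,
      (∀ i, univ.sup (fun k => ((A i k : ℝ) : WithBot ℝ) + x k) =
            univ.sup (fun k => ((B i k : ℝ) : WithBot ℝ) + x k)) →
      ((∀ i, x i = ⊥) ∨ (∀ i, x i ≠ ⊥))) ↔
    (∀ x : Fin n → WithBot ℝ,
      (∀ i, univ.sup (fun k => ((A i k : ℝ) : WithBot ℝ) + x k) =
            univ.sup (fun k => ((B i k : ℝ) : WithBot ℝ) + x k)) →
      ∀ k : Fin n,
        univ.sup (fun i => ((if i = k then α else 0 : ℝ) : WithBot ℝ) + x i) =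
        univ.sup (fun i => ((if i = k then α else (-1) : ℝ) : WithBot ℝ) + x i)) := by
  constructor
  · intro hbdd x hx k
    rcases hbdd x hx with hbot | hfin
    · exact (maxPlusDot_of_forall_eq_bot _ hbot).trans (maxPlusDot_of_forall_eq_bot _ hbot).symm
    · lift x to Fin n → ℝ using hfin
      have hα0 : 0 < α := by simpa using hα 0 k k
      have hspread := forall_lt_add_of_isMaxPlusSolution hα0 hα hbdd hx
      exact (maxPlusDot_ite_of_forall_lt le_rfl (hspread · k)).trans
        (maxPlusDot_ite_of_forall_lt (by norm_num) (hspread · k)).symm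
  · intro hD x hx
    by_contra! h
    obtain ⟨⟨j, hj⟩, k, hk⟩ := h
    exact maxPlusDot_ite_ne_of_eq_bot hj hk α (by norm_num) (hD x hx k)

theorem stmt4 {m n : ℕ} [NeZero m] [NeZero n]
    (A B : Fin m → Fin n → ℝ) (α : ℝ)
    (hα : ∀ (i : Fin m) (j k : Fin n),
      max (A i k) (B i k) - max (A i j) (B i j) < α) :
    (∀ x : Fin n → WithBot ℝ,
      (∀ i, univ.sup (fun k => ((A i k : ℝ) : WithBot ℝ) + x k) =
            univ.sup (fun k => ((B i k : ℝ) : WithBot ℝ) + x k)) →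
      ((∀ i, x i = ⊥) ∨ (∀ i, x i ≠ ⊥))) ↔
    (∀ x : Fin n → WithBot ℝ,
      (∀ i, univ.sup (fun k => ((A i k : ℝ) : WithBot ℝ) + x k) =
            univ.sup (fun k => ((B i k : ℝ) : WithBot ℝ) + x k)) →
      ∀ k : Fin n,
        univ.sup (fun i => ((if i = k then α else 0 : ℝ) : WithBot ℝ) + x i) =
        univ.sup (fun i => ((if i = k then α else (-1) : ℝ) : WithBot ℝ) + x i)) :=
  stmt4_general A B α hα
end

section
/- Let S ⊆ (Fin n → ℝ) be a set that is topologically closed (for the sup metric on Fin n → ℝ), closed under pointwise maximum (x, y ∈ S implies fun j => max (x j) (y j) ∈ S), and closed under translation by constants (x ∈ S and c ∈ ℝ implies fun j => c + x j ∈ S). Then S is closed under pointwise minimum (x, y ∈ S implies fun j => min (x j) (y j) ∈ S) if and only if S is locally min-plus convex at every point, i.e. for every x ∈ S there exists r > 0 such that for all y z ∈ S with max_j |y j − x j| < r and max_j |z j − x j| < r, the vector fun j => min (y j) (z j) belongs to S. -/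
/-!
Write `M s t := min x y ⊔ (x - s) ⊔ (y - t)` (coordinatewise, `s t ≥ 0`). The edges `M s 0 = (x - s) ⊔ y`
and `M 0 t = x ⊔ (y - t)` lie in `S` by closure under translation and maximum, `M d d = min x y` for
`d = dist x y`, and `M s' t ⊓ M s t' = M s' t'` whenever `s ≤ s'`, `t ≤ t'`. As `M` is 1-Lipschitz in
`(s, t)`, this identity lets local min-closedness fill in the quadrant `s, t ≥ 0` square by square on a
fine grid. The mesh can be fixed in advance: the centres `M s t` lie in the compact set
`S ∩ [min x y, max x y]`, on which the local radius is uniform by the Lebesgue number lemma.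
-/

open Metric

theorem IsCompact.exists_uniform_radius {X : Type*} [PseudoMetricSpace X] {C : Set X}
    (hC : IsCompact C) {Q : X → X → Prop}
    (hloc : ∀ x ∈ C, ∃ r > 0, ∀ y ∈ ball x r, ∀ z ∈ ball x r, Q y z) :
    ∃ δ > 0, ∀ x ∈ C, ∀ y ∈ ball x δ, ∀ z ∈ ball x δ, Q y z := by
  choose! r hr hQ using hloc
  obtain ⟨δ, hδ, hball⟩ := lebesgue_number_lemma_of_metric (c := fun x : C => ball (x : X) (r x))
    hC (fun _ => isOpen_ball) fun x hx => Set.mem_iUnion.2 ⟨⟨x, hx⟩, mem_ball_self (hr x hx)⟩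
  refine ⟨δ, hδ, fun x hx y hy z hz => ?_⟩
  obtain ⟨⟨c, hc⟩, hsub⟩ := hball x hx
  exact hQ c hc y (hsub hy) z (hsub hz)

theorem quadrant_induction {P : ℝ → ℝ → Prop} {δ : ℝ} (hδ : 0 < δ)
    (hs0 : ∀ s, 0 ≤ s → P s 0) (h0t : ∀ t, 0 ≤ t → P 0 t)
    (hstep : ∀ s t s' t', 0 ≤ s → 0 ≤ t → s ≤ s' → s' < s + δ → t ≤ t' → t' < t + δ →
      P s t → P s' t → P s t' → P s' t')
    {s t : ℝ} (hs : 0 ≤ s) (ht : 0 ≤ t) : P s t := by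
  obtain ⟨N, hN⟩ := exists_nat_gt (max s t / δ)
  have hN₀ : (0 : ℝ) < N := (div_nonneg (le_max_of_le_left hs) hδ.le).trans_lt hN
  have hmax : max s t < N * δ := by rwa [div_lt_iff₀ hδ] at hN
  set a := s / N
  set b := t / N
  have ha : 0 ≤ a := div_nonneg hs hN₀.le
  have hb : 0 ≤ b := div_nonneg ht hN₀.le
  have haδ : a < δ := by rw [div_lt_iff₀' hN₀]; exact (le_max_left s t).trans_lt hmax
  have hbδ : b < δ := by rw [div_lt_iff₀' hN₀]; exact (le_max_right s t).trans_lt hmax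
  have grid : ∀ l k : ℕ, P (k * a) (l * b) := by
    intro l
    induction l with
    | zero => intro k; simpa using hs0 _ (by positivity)
    | succ l ihl =>
      intro k
      induction k with
      | zero => simpa using h0t _ (by positivity)
      | succ k ihk =>
        push_cast
        exact hstep _ _ _ _ (by positivity) (by positivity) (by linarith) (by linarith)
          (by linarith) (by linarith) (ihl k) (mod_cast ihl (k + 1)) (mod_cast ihk)
  simpa [a, b, mul_div_cancel₀, hN₀.ne'] using grid N N

section MinApprox

variable {ι : Type*}

def minApprox (x y : ι → ℝ) (s t : ℝ) : ι → ℝ :=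
  fun j => max (min (x j) (y j)) (max (x j - s) (y j - t))

variable (x y : ι → ℝ)

theorem minApprox_zero_right (s : ℝ) :
    minApprox x y s 0 = fun j => max (-s + x j) (y j) := by
  funext j
  simp only [minApprox, sub_zero, neg_add_eq_sub]
  exact max_eq_right ((min_le_right _ _).trans (le_max_right _ _))

theorem minApprox_zero_left (t : ℝ) :
    minApprox x y 0 t = fun j => max (x j) (-t + y j) := by
  funext j
  simp only [minApprox, sub_zero, neg_add_eq_sub]
  exact max_eq_right ((min_le_left _ _).trans (le_max_left _ _))

theorem minApprox_dist_dist [Fintype ι] :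
    minApprox x y (dist x y) (dist x y) = fun j => min (x j) (y j) := by
  funext j
  have hj : |x j - y j| ≤ dist x y := by simpa [Real.dist_eq] using dist_le_pi_dist x y j
  have := abs_le.1 hj
  refine max_eq_left (max_le (le_min ?_ ?_) (le_min ?_ ?_)) <;>
    linarith [dist_nonneg (x := x) (y := y)]

theorem min_minApprox {s t s' t' : ℝ} (hs : 0 ≤ s) (ht : 0 ≤ t) (hss' : s ≤ s') (htt' : t ≤ t') :
    (fun j => min (minApprox x y s' t j) (minApprox x y s t' j)) = minApprox x y s' t' := by
  funext j
  simp only [minApprox, min_def, max_def]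
  split_ifs <;> linarith

theorem dist_minApprox_le [Fintype ι] (s t s' t' : ℝ) :
    dist (minApprox x y s t) (minApprox x y s' t') ≤ max |s - s'| |t - t'| := by
  refine (dist_pi_le_iff (by positivity)).2 fun j => ?_
  rw [Real.dist_eq]
  refine (abs_max_sub_max_le_max _ _ _ _).trans ?_
  rw [sub_self, abs_zero, max_eq_right (abs_nonneg _)]
  refine (abs_max_sub_max_le_max _ _ _ _).trans (le_of_eq ?_)
  rw [sub_sub_sub_cancel_left, sub_sub_sub_cancel_left, abs_sub_comm s, abs_sub_comm t]

theorem minApprox_mem_Icc {s t : ℝ} (hs : 0 ≤ s) (ht : 0 ≤ t) :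
    minApprox x y s t ∈ Set.Icc (fun j => min (x j) (y j)) (fun j => max (x j) (y j)) :=
  ⟨fun _ => le_max_left _ _, fun j => max_le ((min_le_left _ _).trans (le_max_left _ _))
    (max_le_max (by linarith) (by linarith))⟩

end MinApprox

theorem min_mem_of_locally_min_mem {ι : Type*} [Fintype ι] {S : Set (ι → ℝ)}
    (hclosed : IsClosed S)
    (hmax : ∀ x ∈ S, ∀ y ∈ S, (fun j => max (x j) (y j)) ∈ S)
    (htrans : ∀ x ∈ S, ∀ c : ℝ, (fun j => c + x j) ∈ S)
    (hloc : ∀ x ∈ S, ∃ r > 0, ∀ y ∈ ball x r, ∀ z ∈ ball x r,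
      y ∈ S → z ∈ S → (fun j => min (y j) (z j)) ∈ S)
    {x y : ι → ℝ} (hx : x ∈ S) (hy : y ∈ S) : (fun j => min (x j) (y j)) ∈ S := by
  set K := Set.Icc (fun j => min (x j) (y j)) (fun j => max (x j) (y j))
  have hcompact : IsCompact (S ∩ K) := isCompact_Icc.inter_left hclosed
  obtain ⟨δ, hδ, hunif⟩ := hcompact.exists_uniform_radius fun z hz => hloc z hz.1
  have hclose {s t s' t'} (hs : s ≤ s') (hs' : s' < s + δ) (ht : t ≤ t') (ht' : t' < t + δ) :
      minApprox x y s' t' ∈ ball (minApprox x y s t) δ := by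
    refine mem_ball.2 ((dist_minApprox_le x y _ _ _ _).trans_lt (max_lt ?_ ?_)) <;>
      rw [abs_lt] <;> constructor <;> linarith
  have hquad : ∀ s t, 0 ≤ s → 0 ≤ t → minApprox x y s t ∈ S := fun s t hs ht =>
    quadrant_induction hδ
      (fun s _ => minApprox_zero_right x y s ▸ hmax _ (htrans x hx (-s)) y hy)
      (fun t _ => minApprox_zero_left x y t ▸ hmax x hx _ (htrans y hy (-t)))
      (fun s t s' t' hs ht hss' hs' htt' ht' hst hs't hst' =>
        min_minApprox x y hs ht hss' htt' ▸ hunif _ ⟨hst, minApprox_mem_Icc x y hs ht⟩ _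
          (hclose hss' hs' le_rfl (by linarith)) _ (hclose le_rfl (by linarith) htt' ht') hs't hst')
      hs ht
  exact minApprox_dist_dist x y ▸ hquad _ _ dist_nonneg dist_nonneg

theorem stmt9 {n : ℕ} (S : Set (Fin n → ℝ))
    (hclosed : IsClosed S)
    (hmax : ∀ x ∈ S, ∀ y ∈ S, (fun j => max (x j) (y j)) ∈ S)
    (htrans : ∀ x ∈ S, ∀ c : ℝ, (fun j => c + x j) ∈ S) :
    (∀ x ∈ S, ∀ y ∈ S, (fun j => min (x j) (y j)) ∈ S) ↔
    (∀ x ∈ S, ∃ r > (0 : ℝ), ∀ y ∈ S, ∀ z ∈ S,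
      (∀ j, |y j - x j| < r) → (∀ j, |z j - x j| < r) →
      (fun j => min (y j) (z j)) ∈ S) := by
  refine ⟨fun hmin x _ => ⟨1, one_pos, fun y hy z hz _ _ => hmin y hy z hz⟩, fun hloc x hx y hy => ?_⟩
  refine min_mem_of_locally_min_mem hclosed hmax htrans (fun x hx => ?_) hx hy
  obtain ⟨r, hr, hmin⟩ := hloc x hx
  have hcoord {z : Fin n → ℝ} (hz : z ∈ ball x r) (j : Fin n) : |z j - x j| < r := by
    simpa [Real.dist_eq] using (dist_pi_lt_iff hr).1 (mem_ball.1 hz) j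
  exact ⟨r, hr, fun y hy z hz hyS hzS => hmin y hyS z hzS (hcoord hy) (hcoord hz)⟩
end

section
/- Let A B : Fin m → Fin n → ℝ. Assume: (a) the solution set is projectively bounded, i.e. every x : Fin n → WithBot ℝ with Finset.univ.sup (fun k => (A i k : WithBot ℝ) + x k) = Finset.univ.sup (fun k => (B i k : WithBot ℝ) + x k) for all i satisfies either x i = ⊥ for all i or x i ≠ ⊥ for all i; (b) every real solution x : Fin n → ℝ is stable; (c) there is v : Fin m → (Fin n → ℝ) such that for every i, v i is a real solution, v i ≤ Cᵢᵀ pointwise, every real solution y with y ≤ Cᵢᵀ satisfies y ≤ v i, and v i ∈ R(A i, B i) where A i, B i denote the i-th rows. Then the set of real solutions is closed under pointwise minimum: if x and y are real solutions then so is fun j => min (x j) (y j). -/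
open Finset

/-- Max-plus product of a row vector with a vector: `a ⊗ x = max_i (a i + x i)`. -/
noncomputable def rowP {n : ℕ} [NeZero n] (a x : Fin n → ℝ) : ℝ :=
  univ.sup' univ_nonempty fun i => a i + x i

/-- The argmax set `K(a, x) = { i | a ⊗ x = a i + x i }`. -/
def Kset {n : ℕ} [NeZero n] (a x : Fin n → ℝ) : Set (Fin n) :=
  {i | rowP a x = a i + x i}

/-- Membership in the set `R(a, b)` from Definition 4.4 of the paper. -/
def Rmem {n : ℕ} [NeZero n] (a b x : Fin n → ℝ) : Prop :=
  (∃ i j : Fin n, i ≠ j ∧ Kset a x = {i} ∧ Kset b x = {j}) ∨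
  (∃ i : Fin n, i ∈ Kset a x ∧ Kset b x = {i}) ∨
  (Kset a x = Kset b x)

/-!
For a solution `x`, the vector `x - (Aᵢ ⊗ x)` is a solution below `Cᵢ`, hence below `vᵢ`, and
`Aᵢ ⊗ vᵢ = Bᵢ ⊗ vᵢ = 0`; so every argmax of row `i` on a solution is an argmax on `vᵢ`. The cases
defining `R(Aᵢ, Bᵢ)` then leave rows of two kinds: either all solutions share an argmax of `Aᵢ` and
one of `Bᵢ`, and row `i` is balanced on the minimum of any two solutions; or on every solution the
argmax sets of `Aᵢ` and `Bᵢ` coincide, and row `i` stays balanced near every solution. Along the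
path `t ↦ min x (max y (x - t))` of minima of two solutions, the set of `t` where the path is a
solution is therefore clopen in `ℝ`. It contains `0`, where the path is `x`, so it contains large
`t`, where the path is `min x y`.
-/

open Finset Filter Topology

namespace MaxPlus

section Row

variable {n : ℕ} [NeZero n] {a b x x' w : Fin n → ℝ} {k : Fin n}

lemma mem_Kset : k ∈ Kset a x ↔ rowP a x = a k + x k := Iff.rfl

lemma le_rowP (a x : Fin n → ℝ) (j : Fin n) : a j + x j ≤ rowP a x :=
  le_sup' (fun k => a k + x k) (mem_univ j)

lemma rowP_le {c : ℝ} (h : ∀ j, a j + x j ≤ c) : rowP a x ≤ c :=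
  sup'_le _ _ fun j _ => h j

lemma rowP_mono (h : x ≤ w) : rowP a x ≤ rowP a w :=
  rowP_le fun j => (add_le_add_right (h j) _).trans (le_rowP a w j)

lemma Kset_nonempty (a x : Fin n → ℝ) : (Kset a x).Nonempty := by
  obtain ⟨j, -, hj⟩ := exists_mem_eq_sup' univ_nonempty fun k => a k + x k
  exact ⟨j, hj⟩

lemma continuous_rowP (a : Fin n → ℝ) : Continuous (rowP a) :=
  Continuous.finset_sup'_apply _ fun k _ => continuous_const.add (continuous_apply k)

lemma rowP_sub_const (a x : Fin n → ℝ) (c : ℝ) : rowP a (fun j => x j - c) = rowP a x - c := by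
  refine le_antisymm (rowP_le fun j => by linarith [le_rowP a x j]) ?_
  obtain ⟨k, hk⟩ := Kset_nonempty a x
  linarith [mem_Kset.1 hk, le_rowP a (fun j => x j - c) k]

lemma rowP_max (a x w : Fin n → ℝ) :
    rowP a (fun j => max (x j) (w j)) = max (rowP a x) (rowP a w) :=
  le_antisymm
    (rowP_le fun j => by rw [← max_add_add_left]; exact max_le_max (le_rowP a x j) (le_rowP a w j))
    (max_le (rowP_mono fun j => le_max_left _ _) (rowP_mono fun j => le_max_right _ _))

lemma rowP_min_of_mem_Kset (hx : k ∈ Kset a x) (hw : k ∈ Kset a w) :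
    rowP a (fun j => min (x j) (w j)) = min (rowP a x) (rowP a w) :=
  le_antisymm
    (rowP_le fun j => by rw [← min_add_add_left]; exact min_le_min (le_rowP a x j) (le_rowP a w j))
    (by
      rw [mem_Kset.1 hx, mem_Kset.1 hw, min_add_add_left]
      exact le_rowP a (fun j => min (x j) (w j)) k)

lemma mem_Kset_of_subset_singleton (h : Kset a x ⊆ {k}) : k ∈ Kset a x := by
  obtain ⟨j, hj⟩ := Kset_nonempty a x
  rwa [← Set.mem_singleton_iff.1 (h hj)]

lemma eq_of_mem_Kset (hval : rowP a x = rowP b x) (ha : k ∈ Kset a x) (hb : k ∈ Kset b x) :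
    a k = b k := by
  linarith [mem_Kset.1 ha, mem_Kset.1 hb]

lemma mem_Kset_of_eq (hval : rowP a x = rowP b x) (hab : a k = b k) (hk : k ∈ Kset a x) :
    k ∈ Kset b x :=
  mem_Kset.2 (by rw [← hval, mem_Kset.1 hk, hab])

lemma mem_Kset_of_sub_rowP_le (hw : rowP a w = 0) (hle : ∀ j, x j - rowP a x ≤ w j)
    (hk : k ∈ Kset a x) : k ∈ Kset a w :=
  mem_Kset.2 (by linarith [mem_Kset.1 hk, le_rowP a w k, hle k])

lemma eventually_Kset_subset (a x : Fin n → ℝ) : ∀ᶠ x' in 𝓝 x, Kset a x' ⊆ Kset a x := by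
  have hgap : ∀ᶠ x' in 𝓝 x, ∀ k, k ∉ Kset a x → a k + x' k < rowP a x' := by
    refine eventually_all.2 fun k => ?_
    by_cases hk : k ∈ Kset a x
    · exact Eventually.of_forall fun _ h => (h hk).elim
    · have hlt : a k + x k < rowP a x := (le_rowP a x k).lt_of_ne (Ne.symm hk)
      exact ((continuous_const.add (continuous_apply k)).continuousAt.eventually_lt
        (continuous_rowP a).continuousAt hlt).mono fun _ h _ => h
  filter_upwards [hgap] with x' hx' k hk
  by_contra hk'
  exact (hx' k hk').ne' (mem_Kset.1 hk)

lemma rowP_le_of_Kset_subset (hval : rowP a x = rowP b x) (hK : Kset a x ⊆ Kset b x)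
    (hx' : Kset a x' ⊆ Kset a x) : rowP a x' ≤ rowP b x' := by
  obtain ⟨k, hk⟩ := Kset_nonempty a x'
  rw [mem_Kset.1 hk, eq_of_mem_Kset hval (hx' hk) (hK (hx' hk))]
  exact le_rowP b x' k

/-- Near `x` the maxima are attained only at argmaxes of `x`, where `a` and `b` agree. -/
lemma eventually_rowP_eq (hval : rowP a x = rowP b x) (hK : Kset a x = Kset b x) :
    ∀ᶠ x' in 𝓝 x, rowP a x' = rowP b x' := by
  filter_upwards [eventually_Kset_subset a x, eventually_Kset_subset b x] with x' ha hb
  exact le_antisymm (rowP_le_of_Kset_subset hval hK.le ha)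
    (rowP_le_of_Kset_subset hval.symm hK.ge hb)

end Row

section Solution

variable {m n : ℕ} [NeZero n] {A B : Fin m → Fin n → ℝ} {x y w : Fin n → ℝ}
  {i : Fin m}

def IsSolution (A B : Fin m → Fin n → ℝ) (x : Fin n → ℝ) : Prop :=
  ∀ i, rowP (A i) x = rowP (B i) x

/-- The row `Cᵢ` of the paper. -/
def capRow (A B : Fin m → Fin n → ℝ) (i : Fin m) : Fin n → ℝ :=
  fun j => -max (A i j) (B i j)

def HasCommonArgmax (A B : Fin m → Fin n → ℝ) (i : Fin m) : Prop :=
  ∃ κA κB, ∀ x, IsSolution A B x → κA ∈ Kset (A i) x ∧ κB ∈ Kset (B i) x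

def HasEqualArgmaxSets (A B : Fin m → Fin n → ℝ) (i : Fin m) : Prop :=
  ∀ x, IsSolution A B x → Kset (A i) x = Kset (B i) x

lemma IsSolution.sub_const (hx : IsSolution A B x) (c : ℝ) :
    IsSolution A B fun j => x j - c := fun i => by
  rw [rowP_sub_const, rowP_sub_const, hx i]

lemma IsSolution.pointwise_max (hx : IsSolution A B x) (hy : IsSolution A B y) :
    IsSolution A B fun j => max (x j) (y j) := fun i => by
  rw [rowP_max, rowP_max, hx i, hy i]

lemma isClosed_setOf_isSolution : IsClosed {x : Fin n → ℝ | IsSolution A B x} := by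
  simp only [IsSolution, Set.ofPred_forall]
  exact isClosed_iInter fun i => isClosed_eq (continuous_rowP _) (continuous_rowP _)

lemma IsSolution.sub_rowP_mem (hx : IsSolution A B x) (i : Fin m) :
    (fun j => x j - rowP (A i) x) ∈ {y | IsSolution A B y ∧ y ≤ capRow A B i} := by
  refine ⟨hx.sub_const _, fun j => ?_⟩
  have : max (A i j) (B i j) ≤ rowP (A i) x - x j :=
    max_le (by linarith [le_rowP (A i) x j]) (by linarith [le_rowP (B i) x j, hx i])
  simp only [capRow]
  linarith

section Greatest

variable (hw : IsGreatest {y | IsSolution A B y ∧ y ≤ capRow A B i} w)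
include hw

lemma rowP_eq_zero_of_isGreatest : rowP (A i) w = 0 ∧ rowP (B i) w = 0 := by
  have hA : rowP (A i) w = 0 := by
    refine le_antisymm (rowP_le fun j => ?_) ?_
    · have hj : w j ≤ -max (A i j) (B i j) := hw.1.2 j
      linarith [le_max_left (A i j) (B i j)]
    · linarith [hw.2 (hw.1.1.sub_rowP_mem i) 0]
  exact ⟨hA, hw.1.1 i ▸ hA⟩

lemma Kset_subset_of_isGreatest (hx : IsSolution A B x) :
    Kset (A i) x ⊆ Kset (A i) w ∧ Kset (B i) x ⊆ Kset (B i) w :=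
  ⟨fun _ => mem_Kset_of_sub_rowP_le (rowP_eq_zero_of_isGreatest hw).1 (hw.2 (hx.sub_rowP_mem i)),
    fun _ => mem_Kset_of_sub_rowP_le (rowP_eq_zero_of_isGreatest hw).2
      (by rw [← hx i]; exact hw.2 (hx.sub_rowP_mem i))⟩

lemma hasCommonArgmax_or_hasEqualArgmaxSets_of_rmem (hR : Rmem (A i) (B i) w) :
    HasCommonArgmax A B i ∨ HasEqualArgmaxSets A B i := by
  have hval : rowP (A i) w = rowP (B i) w := hw.1.1 i
  have hsub := fun x (hx : IsSolution A B x) => Kset_subset_of_isGreatest hw hx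
  rcases hR with ⟨κA, κB, -, hKA, hKB⟩ | ⟨κ, hκ, hKB⟩ | hK
  · exact .inl ⟨κA, κB, fun x hx =>
      ⟨mem_Kset_of_subset_singleton ((hsub x hx).1.trans hKA.subset),
        mem_Kset_of_subset_singleton ((hsub x hx).2.trans hKB.subset)⟩⟩
  · have hAB : A i κ = B i κ := eq_of_mem_Kset hval hκ (hKB ▸ rfl)
    refine .inl ⟨κ, κ, fun x hx => ?_⟩
    have hκB := mem_Kset_of_subset_singleton ((hsub x hx).2.trans hKB.subset)
    exact ⟨mem_Kset_of_eq (hx i).symm hAB.symm hκB, hκB⟩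
  · refine .inr fun x hx => Set.Subset.antisymm (fun k hk => ?_) (fun k hk => ?_)
    · have hkw := (hsub x hx).1 hk
      exact mem_Kset_of_eq (hx i) (eq_of_mem_Kset hval hkw (hK ▸ hkw)) hk
    · have hkw := (hsub x hx).2 hk
      exact mem_Kset_of_eq (hx i).symm (eq_of_mem_Kset hval (hK ▸ hkw) hkw).symm hk

end Greatest

lemma HasCommonArgmax.rowP_min_eq (h : HasCommonArgmax A B i) (hx : IsSolution A B x)
    (hy : IsSolution A B y) :
    rowP (A i) (fun j => min (x j) (y j)) = rowP (B i) (fun j => min (x j) (y j)) := by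
  obtain ⟨κA, κB, hκ⟩ := h
  rw [rowP_min_of_mem_Kset (hκ x hx).1 (hκ y hy).1, rowP_min_of_mem_Kset (hκ x hx).2 (hκ y hy).2,
    hx i, hy i]

theorem IsSolution.pointwise_min (hrow : ∀ i, HasCommonArgmax A B i ∨ HasEqualArgmaxSets A B i)
    (hx : IsSolution A B x) (hy : IsSolution A B y) :
    IsSolution A B fun j => min (x j) (y j) := by
  set z : ℝ → Fin n → ℝ := fun t j => min (x j) (max (y j) (x j - t))
  have hz : Continuous z := by fun_prop
  have hopen : IsOpen {t | IsSolution A B (z t)} := isOpen_iff_mem_nhds.2 fun t ht =>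
    eventually_all.2 fun i => (hrow i).elim
      (fun h => Eventually.of_forall fun s => h.rowP_min_eq hx (hy.pointwise_max (hx.sub_const s)))
      (fun h => hz.continuousAt.eventually (eventually_rowP_eq (ht i) (h _ ht)))
  have hclopen : IsClopen {t | IsSolution A B (z t)} :=
    ⟨isClosed_setOf_isSolution.preimage hz, hopen⟩
  have hz0 : z 0 = x := funext fun j => by simp [z]
  have hall := hclopen.eq_univ ⟨0, show IsSolution A B (z 0) from hz0 ▸ hx⟩
  obtain ⟨b, hb⟩ := Finite.bddAbove_range fun j => x j - y j
  have hzb : z b = fun j => min (x j) (y j) :=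
    funext fun j => by simp only [z, max_eq_left (by linarith [hb ⟨j, rfl⟩] : x j - b ≤ y j)]
  have hb_mem : b ∈ {t | IsSolution A B (z t)} := hall ▸ Set.mem_univ b
  rwa [Set.mem_ofPred_eq, hzb] at hb_mem

end Solution

end MaxPlus

theorem stmt12_general {m n : ℕ} [NeZero m] [NeZero n]
    (A B : Fin m → Fin n → ℝ)
    (v : Fin m → Fin n → ℝ)
    (hv_sol : ∀ i, ∀ i', mpMul A (v i) i' = mpMul B (v i) i')
    (hv_le : ∀ i, ∀ j, v i j ≤ -(max (A i j) (B i j)))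
    (hv_max : ∀ i, ∀ y : Fin n → ℝ, (∀ i', mpMul A y i' = mpMul B y i') →
      (∀ j, y j ≤ -(max (A i j) (B i j))) → ∀ j, y j ≤ v i j)
    (hv_R : ∀ i, Rmem (A i) (B i) (v i))
    (x y : Fin n → ℝ)
    (hx : ∀ i, mpMul A x i = mpMul B x i)
    (hy : ∀ i, mpMul A y i = mpMul B y i) :
    ∀ i, mpMul A (fun j => min (x j) (y j)) i =
         mpMul B (fun j => min (x j) (y j)) i :=
  MaxPlus.IsSolution.pointwise_min
    (fun i => MaxPlus.hasCommonArgmax_or_hasEqualArgmaxSets_of_rmem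
      ⟨⟨hv_sol i, hv_le i⟩, fun y hy => hv_max i y hy.1 hy.2⟩ (hv_R i))
    hx hy

theorem stmt12 {m n : ℕ} [NeZero m] [NeZero n]
    (A B : Fin m → Fin n → ℝ)
    (hbound : ∀ x : Fin n → WithBot ℝ,
      (∀ i, univ.sup (fun k => ((A i k : ℝ) : WithBot ℝ) + x k) =
            univ.sup (fun k => ((B i k : ℝ) : WithBot ℝ) + x k)) →
      ((∀ i, x i = ⊥) ∨ (∀ i, x i ≠ ⊥)))
    (hstable : ∀ x : Fin n → ℝ, (∀ i, mpMul A x i = mpMul B x i) → phi0 A B x = x)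
    (v : Fin m → Fin n → ℝ)
    (hv_sol : ∀ i, ∀ i', mpMul A (v i) i' = mpMul B (v i) i')
    (hv_le : ∀ i, ∀ j, v i j ≤ -(max (A i j) (B i j)))
    (hv_max : ∀ i, ∀ y : Fin n → ℝ, (∀ i', mpMul A y i' = mpMul B y i') →
      (∀ j, y j ≤ -(max (A i j) (B i j))) → ∀ j, y j ≤ v i j)
    (hv_R : ∀ i, Rmem (A i) (B i) (v i))
    (x y : Fin n → ℝ)
    (hx : ∀ i, mpMul A x i = mpMul B x i)
    (hy : ∀ i, mpMul A y i = mpMul B y i) :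
    ∀ i, mpMul A (fun j => min (x j) (y j)) i =
         mpMul B (fun j => min (x j) (y j)) i :=
  stmt12_general A B v hv_sol hv_le hv_max hv_R x y hx hy
end
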